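/- arXiv:1601.00579 — 5 statements merged into one kernel-verified Lean document; each statement's English description precedes it below -/
import Mathlib

section
/- Let K ⊆ L be fields with L infinite, and let M ∈ Mat_m(K[x₁,…,xₙ]). Then M is strongly nilpotent over L (i.e., there exists r ≥ 1 such that M(v⁽¹⁾)·M(v⁽²⁾)⋯M(v⁽ʳ⁾) = 0 for all v⁽¹⁾,…,v⁽ʳ⁾ ∈ Lⁿ) if and only if M is similar over K to a triangular matrix in Mat_m(K[x]) whose principal diagonal is entirely zero. -/
/-!
Write `M = ∑_d x^d M_d` with `M_d ∈ Mat_m(K)`. Let `N_k ⊆ K^m` be the space of vectors killed by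
every product `M(v⁽¹⁾) ⋯ M(v⁽ᵏ⁾)` over `L`; then `N_0 = 0` and strong nilpotency says `N_r = K^m`.
Since `L` is infinite, a polynomial identity in the last evaluation point can be read off
coefficientwise, so every `M_d` maps `N_{k+1}` into `N_k`. Hence every proper subspace `W` admits a
vector outside `W` that all `M_d` send into `W`; adding such vectors one at a time gives a basis in
which every `M_d`, and thus `M`, is strictly upper triangular. Conversely, a product of `m`
strictly triangular `m × m` matrices vanishes, and this survives evaluation and conjugation.
-/

open Module Submodule MvPolynomial Matrix

section Triangularization

variable {K V ι : Type*} [Field K] [AddCommGroup V] [Module K V]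

theorem exists_notMem_forall_apply_mem_of_filtration (A : ι → V →ₗ[K] V)
    (N : ℕ → Submodule K V) {r : ℕ} (hN0 : N 0 = ⊥) (hNr : N r = ⊤)
    (hA : ∀ i k, ∀ v ∈ N (k + 1), A i v ∈ N k) {W : Submodule K V} (hW : W ≠ ⊤) :
    ∃ v ∉ W, ∀ i, A i v ∈ W := by
  classical
  have hex : ∃ k, ¬N k ≤ W := ⟨r, by rwa [hNr, top_le_iff]⟩
  obtain ⟨k, hk⟩ : ∃ k, Nat.find hex = k + 1 :=
    Nat.exists_eq_succ_of_ne_zero fun h => Nat.find_spec hex (by simp [h, hN0])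
  obtain ⟨v, hvN, hvW⟩ := SetLike.not_le_iff_exists.mp (hk ▸ Nat.find_spec hex)
  have hNk : N k ≤ W := not_not.mp (Nat.find_min hex (by omega))
  exact ⟨v, hvW, fun i => hNk (hA i k v hvN)⟩

variable {A : ι → V →ₗ[K] V}

theorem exists_linearIndependent_forall_apply_mem_span
    (hA : ∀ W : Submodule K V, W ≠ ⊤ → ∃ v ∉ W, ∀ i, A i v ∈ W) :
    ∀ k ≤ finrank K V, ∃ f : Fin k → V,
      LinearIndependent K f ∧ ∀ i j, A i (f j) ∈ span K (f '' Set.Iio j) := by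
  intro k
  induction k with
  | zero => exact fun _ => ⟨Fin.elim0, linearIndependent_empty_type, fun _ j => j.elim0⟩
  | succ k ih =>
    intro hk
    obtain ⟨f, hf, hfA⟩ := ih (by omega)
    have hspan : span K (Set.range f) ≠ ⊤ := fun h => by
      have := finrank_span_eq_card hf
      rw [h, finrank_top, Fintype.card_fin] at this
      omega
    obtain ⟨v, hv, hvA⟩ := hA _ hspan
    refine ⟨Fin.snoc f v, hf.finSnoc hv, fun i j => ?_⟩
    induction j using Fin.lastCases with
    | last =>
      have : (Fin.snoc f v : Fin (k + 1) → V) '' Set.Iio (Fin.last k) = Set.range f := by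
        ext x; simp [Fin.exists_fin_succ', Fin.castSucc_lt_last]
      simpa [this] using hvA i
    | cast j =>
      have : (Fin.snoc f v : Fin (k + 1) → V) '' Set.Iio j.castSucc = f '' Set.Iio j := by
        ext x; simp [Fin.exists_fin_succ', (Fin.castSucc_lt_last j).not_gt]
      simpa [this] using hfA i j

theorem exists_basis_forall_apply_mem_flag [FiniteDimensional K V] {n : ℕ} (hn : finrank K V = n)
    (hA : ∀ W : Submodule K V, W ≠ ⊤ → ∃ v ∉ W, ∀ i, A i v ∈ W) :
    ∃ b : Basis (Fin n) K V, ∀ i j, A i (b j) ∈ b.flag j.castSucc := by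
  obtain ⟨f, hf, hfA⟩ := exists_linearIndependent_forall_apply_mem_span hA n hn.ge
  refine ⟨basisOfLinearIndependentOfCardEqFinrank' f hf (by simp [hn]), fun i j => ?_⟩
  simpa [Basis.flag, Fin.castSucc_lt_castSucc_iff, Set.Iio] using hfA i j

end Triangularization

def Matrix.IsStrictUpperTriangular {ι α : Type*} [LE ι] [Zero α] (A : Matrix ι ι α) : Prop :=
  ∀ i j, j ≤ i → A i j = 0

theorem Matrix.IsStrictUpperTriangular.map {ι α β : Type*} [LE ι] [Zero α] [Zero β]
    {A : Matrix ι ι α} (hA : A.IsStrictUpperTriangular) {f : α → β} (hf : f 0 = 0) :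
    (A.map f).IsStrictUpperTriangular :=
  fun i j hji => by simp [hA i j hji, hf]

theorem LinearMap.toMatrix_isStrictUpperTriangular_of_apply_mem_flag {R M : Type*} [CommRing R]
    [AddCommGroup M] [Module R M] {n : ℕ} (b : Basis (Fin n) R M) {f : M →ₗ[R] M}
    (hf : ∀ j, f (b j) ∈ b.flag j.castSucc) : (LinearMap.toMatrix b b f).IsStrictUpperTriangular :=
  fun _ j hji => by
    rw [LinearMap.toMatrix_apply]
    exact b.flag_le_ker_coord (Fin.castSucc_le_castSucc_iff.mpr hji) (hf j)

theorem Matrix.exists_GL_forall_conj_isStrictUpperTriangular {K ι : Type*} [Field K] {m : ℕ}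
    {A : ι → Matrix (Fin m) (Fin m) K}
    (hA : ∀ W : Submodule K (Fin m → K), W ≠ ⊤ → ∃ v ∉ W, ∀ i, A i *ᵥ v ∈ W) :
    ∃ T : GL (Fin m) K, ∀ i,
      (((T⁻¹ : GL (Fin m) K) : Matrix (Fin m) (Fin m) K) * A i * T).IsStrictUpperTriangular := by
  obtain ⟨b, hb⟩ := exists_basis_forall_apply_mem_flag (A := fun i => toLin' (A i))
    (finrank_fin_fun K) hA
  let e := Pi.basisFun K (Fin m)
  refine ⟨⟨e.toMatrix b, b.toMatrix e, e.toMatrix_mul_toMatrix_flip b,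
    b.toMatrix_mul_toMatrix_flip e⟩, fun i => ?_⟩
  have := basis_toMatrix_mul_linearMap_toMatrix_mul_basis_toMatrix b e b e (toLin' (A i))
  rw [LinearMap.toMatrix_eq_toMatrix', LinearMap.toMatrix'_toLin'] at this
  change (b.toMatrix e * A i * e.toMatrix b).IsStrictUpperTriangular
  rw [this]
  exact LinearMap.toMatrix_isStrictUpperTriangular_of_apply_mem_flag b (hb i)

section StrictlyTriangular

variable {α : Type*} [CommRing α] {m : ℕ}

theorem list_prod_apply_eq_zero_of_isStrictUpperTriangular (l : List (Matrix (Fin m) (Fin m) α))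
    (hl : ∀ A ∈ l, A.IsStrictUpperTriangular) {i j : Fin m} (hij : (j : ℕ) < i + l.length) :
    l.prod i j = 0 := by
  induction l generalizing i with
  | nil => exact one_apply_ne (by rintro rfl; simp at hij)
  | cons A l ih =>
    rw [List.prod_cons, mul_apply]
    refine Finset.sum_eq_zero fun x _ => ?_
    rcases le_or_gt x i with hxi | hix
    · rw [hl A List.mem_cons_self i x hxi, zero_mul]
    · rw [ih (fun B hB => hl B (List.mem_cons_of_mem _ hB)) (by simp at hij; omega), mul_zero]

theorem list_prod_eq_zero_of_isStrictUpperTriangular {l : List (Matrix (Fin m) (Fin m) α)}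
    (hl : ∀ A ∈ l, A.IsStrictUpperTriangular) (hm : m ≤ l.length) : l.prod = 0 :=
  ext fun _ j => list_prod_apply_eq_zero_of_isStrictUpperTriangular l hl (by omega)

theorem list_prod_eq_zero_of_isStrictUpperTriangular_transpose
    {l : List (Matrix (Fin m) (Fin m) α)} (hl : ∀ A ∈ l, Aᵀ.IsStrictUpperTriangular)
    (hm : m ≤ l.length) : l.prod = 0 := by
  rw [← transpose_transpose l.prod, transpose_list_prod,
    list_prod_eq_zero_of_isStrictUpperTriangular (by simpa using hl) (by simpa using hm),
    transpose_zero]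

end StrictlyTriangular

theorem Units.list_prod_ofFn_conj {R : Type*} [Monoid R] (u : Rˣ) {k : ℕ} (f : Fin k → R) :
    (List.ofFn fun i => ↑u * f i * ↑u⁻¹).prod = ↑u * (List.ofFn f).prod * ↑u⁻¹ := by
  simpa [ConjAct.units_smul_def, List.map_ofFn, Function.comp_def] using
    (List.smul_prod' (r := ConjAct.toConjAct u) (l := List.ofFn f)).symm

section Evaluation

variable {R S σ ι : Type*} [CommRing R] [CommRing S] [Algebra R S] [Fintype ι]

theorem coeff_mulVec_C (A : Matrix ι ι (MvPolynomial σ R)) (u : ι → R) (d : σ →₀ ℕ) (s : ι) :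
    coeff d ((A *ᵥ fun t => C (u t)) s) = (A.map (coeff d) *ᵥ u) s := by
  simp [mulVec, dotProduct, coeff_sum, mul_comm _ (C _), coeff_C_mul, mul_comm (u _)]

theorem aeval_mulVec_C (A : Matrix ι ι (MvPolynomial σ R)) (u : ι → R) (w : σ → S) (s : ι) :
    aeval w ((A *ᵥ fun t => C (u t)) s) = (A.map (aeval w) *ᵥ (algebraMap R S ∘ u)) s := by
  simp [mulVec, dotProduct, map_sum]

theorem coeff_map_mul_mul_map (X Y : Matrix ι ι R) (A : Matrix ι ι (MvPolynomial σ R))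
    (d : σ →₀ ℕ) (i j : ι) :
    coeff d ((X.map (algebraMap R (MvPolynomial σ R)) * A *
      Y.map (algebraMap R (MvPolynomial σ R))) i j) = (X * A.map (coeff d) * Y) i j := by
  simp [mul_apply, coeff_sum, Finset.sum_mul, mul_comm _ (C _), coeff_C_mul, Finset.mul_sum,
    mul_assoc, mul_comm (Y _ _)]

variable [DecidableEq ι]

noncomputable def evalProd (M : Matrix ι ι (MvPolynomial σ R)) {k : ℕ} (v : Fin k → σ → S) :
    Matrix ι ι S :=
  (List.ofFn fun i => M.map (aeval (v i))).prod

theorem evalProd_snoc (M : Matrix ι ι (MvPolynomial σ R)) {k : ℕ} (v : Fin k → σ → S)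
    (w : σ → S) : evalProd M (Fin.snoc v w) = evalProd M v * M.map (aeval w) := by
  simp only [evalProd, List.ofFn_succ', List.prod_concat, Fin.snoc_castSucc, Fin.snoc_last]

theorem evalProd_conj_eq_zero_iff (T : (Matrix ι ι R)ˣ) (N : Matrix ι ι (MvPolynomial σ R))
    {k : ℕ} (v : Fin k → σ → S) :
    evalProd ((↑(T⁻¹) : Matrix ι ι R).map (algebraMap R (MvPolynomial σ R)) * N *
      (T : Matrix ι ι R).map (algebraMap R (MvPolynomial σ R))) v = 0 ↔ evalProd N v = 0 := by
  have hmap : ∀ (X : Matrix ι ι R) (w : σ → S),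
      (X.map (algebraMap R (MvPolynomial σ R))).map (aeval w) = X.map (algebraMap R S) :=
    fun X w => by simp [Matrix.map_map, Function.comp_def]
  let T' : (Matrix ι ι S)ˣ := Units.map (algebraMap R S).mapMatrix.toMonoidHom T
  have hfactor : ∀ w : σ → S, ((↑(T⁻¹) : Matrix ι ι R).map (algebraMap R (MvPolynomial σ R)) *
      N * (T : Matrix ι ι R).map (algebraMap R (MvPolynomial σ R))).map (aeval w) =
      (↑(T'⁻¹) : Matrix ι ι S) * N.map (aeval w) * (↑(T'⁻¹⁻¹) : Matrix ι ι S) := fun w => by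
    simp only [← AlgHom.mapMatrix_apply, map_mul]
    simp only [AlgHom.mapMatrix_apply, hmap, inv_inv]
    rfl
  simp only [evalProd, hfactor, Units.list_prod_ofFn_conj, Units.mul_right_eq_zero,
    Units.mul_left_eq_zero]

theorem evalProd_eq_zero_of_isStrictUpperTriangular {m k : ℕ}
    {N : Matrix (Fin m) (Fin m) (MvPolynomial σ R)} (hN : N.IsStrictUpperTriangular)
    (v : Fin k → σ → S) (hmk : m ≤ k) : evalProd N v = 0 := by
  refine list_prod_eq_zero_of_isStrictUpperTriangular (fun A hA => ?_) (by simpa using hmk)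
  obtain ⟨i, rfl⟩ := List.mem_ofFn.mp hA
  exact hN.map (map_zero _)

theorem evalProd_eq_zero_of_isStrictUpperTriangular_transpose {m k : ℕ}
    {N : Matrix (Fin m) (Fin m) (MvPolynomial σ R)} (hN : Nᵀ.IsStrictUpperTriangular)
    (v : Fin k → σ → S) (hmk : m ≤ k) : evalProd N v = 0 := by
  refine list_prod_eq_zero_of_isStrictUpperTriangular_transpose (fun A hA => ?_)
    (by simpa using hmk)
  obtain ⟨i, rfl⟩ := List.mem_ofFn.mp hA
  rw [← transpose_map]
  exact hN.map (map_zero _)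

end Evaluation

section Filtration

variable {K : Type*} (L : Type*) {σ ι : Type*} [Field K] [Field L] [Algebra K L] [Fintype ι]
  [DecidableEq ι]

noncomputable def evalKer (M : Matrix ι ι (MvPolynomial σ K)) (k : ℕ) : Submodule K (ι → K) :=
  ⨅ v : Fin k → σ → L, ((LinearMap.ker (evalProd M v).mulVecLin).restrictScalars K).comap
    ((Algebra.linearMap K L).compLeft ι)

variable {L}

theorem mem_evalKer {M : Matrix ι ι (MvPolynomial σ K)} {k : ℕ} {u : ι → K} :
    u ∈ evalKer L M k ↔ ∀ v : Fin k → σ → L, evalProd M v *ᵥ (algebraMap K L ∘ u) = 0 := by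
  simp only [evalKer, mem_iInf, mem_comap, restrictScalars_mem, LinearMap.mem_ker]
  rfl

theorem evalKer_zero (M : Matrix ι ι (MvPolynomial σ K)) : evalKer L M 0 = ⊥ := by
  refine (Submodule.eq_bot_iff _).mpr fun u hu => ?_
  have := mem_evalKer.mp hu Fin.elim0
  simp only [evalProd, List.ofFn_zero, List.prod_nil, one_mulVec] at this
  exact funext fun t => (algebraMap K L).injective (by simpa using congrFun this t)

theorem evalKer_eq_top {M : Matrix ι ι (MvPolynomial σ K)} {r : ℕ}
    (hM : ∀ v : Fin r → σ → L, evalProd M v = 0) : evalKer L M r = ⊤ :=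
  eq_top_iff.mpr fun u _ => mem_evalKer.mpr fun v => by simp [hM v]

theorem coeff_mulVec_mem_evalKer [Infinite L] {M : Matrix ι ι (MvPolynomial σ K)} {k : ℕ}
    {u : ι → K} (hu : u ∈ evalKer L M (k + 1)) (d : σ →₀ ℕ) :
    M.map (coeff d) *ᵥ u ∈ evalKer L M k := by
  refine mem_evalKer.mpr fun v => funext fun s => ?_
  set x := M *ᵥ fun t => C (u t)
  let p : MvPolynomial σ L := ∑ t, C (evalProd M v s t) * map (algebraMap K L) (x t)
  have hp : p = 0 := MvPolynomial.funext fun w => by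
    have := congrFun (mem_evalKer.mp hu (Fin.snoc v w)) s
    rw [evalProd_snoc, ← mulVec_mulVec] at this
    simpa [p, eval_map, ← aeval_def, x, aeval_mulVec_C, mulVec, dotProduct] using this
  have := congrArg (coeff d) hp
  simp only [p, x, coeff_sum, coeff_C_mul, coeff_map, coeff_mulVec_C, coeff_zero] at this
  simpa only [mulVec, dotProduct, Function.comp_apply, Pi.zero_apply] using this

end Filtration

/-- `M ∈ Mat_m(K[x])` is strongly nilpotent over an infinite extension field `L` of `K`
iff `M` is similar over `K` to a triangular matrix whose principal diagonal is zero. -/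
theorem stmt3 (K L : Type*) [Field K] [Field L] [Algebra K L] [Infinite L] (m n : ℕ)
    (M : Matrix (Fin m) (Fin m) (MvPolynomial (Fin n) K)) :
    (∃ r : ℕ, 1 ≤ r ∧ ∀ v : Fin r → Fin n → L,
        (List.ofFn fun i => M.map (MvPolynomial.aeval (v i))).prod = 0) ↔
      ∃ T : GL (Fin m) K,
        (∀ i j : Fin m, i ≤ j →
          (((T⁻¹ : GL (Fin m) K) : Matrix (Fin m) (Fin m) K).map
              (algebraMap K (MvPolynomial (Fin n) K)) * M *
            ((T : Matrix (Fin m) (Fin m) K).map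
              (algebraMap K (MvPolynomial (Fin n) K)))) i j = 0) ∨
        (∀ i j : Fin m, j ≤ i →
          (((T⁻¹ : GL (Fin m) K) : Matrix (Fin m) (Fin m) K).map
              (algebraMap K (MvPolynomial (Fin n) K)) * M *
            ((T : Matrix (Fin m) (Fin m) K).map
              (algebraMap K (MvPolynomial (Fin n) K)))) i j = 0) := by
  constructor
  · rintro ⟨r, -, hM⟩
    obtain ⟨T, hT⟩ := exists_GL_forall_conj_isStrictUpperTriangular
      (A := fun d => M.map (coeff d)) fun W hW =>
        exists_notMem_forall_apply_mem_of_filtration (fun d => toLin' (M.map (coeff d)))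
          (evalKer L M) (evalKer_zero M) (evalKer_eq_top hM)
          (fun d _ _ hu => coeff_mulVec_mem_evalKer hu d) hW
    refine ⟨T, Or.inr fun i j hji => MvPolynomial.ext _ _ fun d => ?_⟩
    rw [coeff_map_mul_mul_map, coeff_zero]
    exact hT d i j hji
  · rintro ⟨T, hN⟩
    refine ⟨m + 1, by omega, fun v => (evalProd_conj_eq_zero_iff T M v).mp ?_⟩
    rcases hN with hN | hN
    · exact evalProd_eq_zero_of_isStrictUpperTriangular_transpose (fun i j hji => hN j i hji) v
        (by omega)
    · exact evalProd_eq_zero_of_isStrictUpperTriangular hN v (by omega)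
end

section
/- Let K be a field and H : Kⁿ → Kᵐ a polynomial map of degree at most d such that d! ≠ 0 in K. If the Jacobian matrix JH is antisymmetric (in particular m = n and (JH)ᵀ = −JH), then deg H ≤ 1. -/
/-!
The third-order tensor `∂ₖ∂ⱼHᵢ` is antisymmetric in `(i, j)` by hypothesis and symmetric in
`(j, k)` because partial derivatives commute; alternating the two symmetries three times each
shows that it equals its own negative, hence vanishes once `2 ≠ 0` (the case `d ≤ 1` being
trivial). And a polynomial with a monomial `xᵅ` of degree at least two has a nonzero second
partial derivative: differentiating in two variables occurring in `xᵅ` multiplies its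
coefficient by two integers between `1` and `d`, which are nonzero in `K` because `d!` is.
-/

open MvPolynomial

theorem Nat.cast_ne_zero_of_factorial_ne_zero {R : Type*} [Semiring R] {m d : ℕ} (hm : 0 < m)
    (hmd : m ≤ d) (hd : (d.factorial : R) ≠ 0) : (m : R) ≠ 0 := by
  obtain ⟨c, hc⟩ := Nat.dvd_factorial hm hmd
  exact fun h => hd (by rw [hc, Nat.cast_mul, h, zero_mul])

namespace MvPolynomial

variable {R σ : Type*}

theorem pderiv_pderiv_comm [CommSemiring R] (i j : σ) (p : MvPolynomial σ R) :
    pderiv i (pderiv j p) = pderiv j (pderiv i p) := by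
  classical
  ext β
  simp only [coeff_pderiv, Finsupp.add_apply, Finsupp.single_apply, add_right_comm β]
  split_ifs <;> subst_vars <;> first | contradiction | (push_cast; ring)

theorem pderiv_pderiv_eq_zero_of_pderiv_antisymm [CommRing R] [NoZeroDivisors R]
    (h2 : (2 : R) ≠ 0) {H : σ → MvPolynomial σ R}
    (hanti : ∀ i j, pderiv j (H i) = -pderiv i (H j)) (i j k : σ) :
    pderiv k (pderiv j (H i)) = 0 := by
  have swap : ∀ a b c, pderiv c (pderiv b (H a)) = -pderiv c (pderiv a (H b)) := fun a b c => by
    rw [hanti, map_neg]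
  have h_self_neg : pderiv k (pderiv j (H i)) = -pderiv k (pderiv j (H i)) :=
    calc pderiv k (pderiv j (H i))
        = -pderiv k (pderiv i (H j)) := swap i j k
      _ = -pderiv i (pderiv k (H j)) := by rw [pderiv_pderiv_comm]
      _ = pderiv i (pderiv j (H k)) := by rw [swap j k i, neg_neg]
      _ = pderiv j (pderiv i (H k)) := pderiv_pderiv_comm _ _ _
      _ = -pderiv j (pderiv k (H i)) := swap k i j
      _ = -pderiv k (pderiv j (H i)) := by rw [pderiv_pderiv_comm]
  have h2' : (2 : MvPolynomial σ R) ≠ 0 := by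
    rwa [← map_ofNat C, Ne, C_eq_zero]
  refine (mul_eq_zero.mp ?_).resolve_left h2'
  rw [two_mul]
  nth_rw 1 [h_self_neg]
  exact neg_add_cancel _

theorem sub_single_one_mem_support_pderiv [CommSemiring R] [NoZeroDivisors R]
    {p : MvPolynomial σ R} {α : σ →₀ ℕ} (hα : α ∈ p.support) {j : σ} (hj : (α j : R) ≠ 0) :
    α - Finsupp.single j 1 ∈ (pderiv j p).support := by
  have hj1 : 1 ≤ α j := Nat.one_le_iff_ne_zero.mpr fun h => hj (by rw [h, Nat.cast_zero])
  rw [mem_support_iff, coeff_pderiv, tsub_add_cancel_of_le (Finsupp.single_le_iff.mpr hj1)]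
  refine mul_ne_zero (mem_support_iff.mp hα) ?_
  have hsucc : (α - Finsupp.single j 1 : σ →₀ ℕ) j + 1 = α j := by
    rw [Finsupp.tsub_apply, Finsupp.single_eq_same, Nat.sub_add_cancel hj1]
  exact_mod_cast hsucc ▸ hj

theorem totalDegree_le_one_of_pderiv_pderiv_eq_zero [CommSemiring R] [NoZeroDivisors R]
    {p : MvPolynomial σ R} {d : ℕ} (hp : p.totalDegree ≤ d) (hd : (d.factorial : R) ≠ 0)
    (h : ∀ j k, pderiv k (pderiv j p) = 0) : p.totalDegree ≤ 1 := by
  by_contra! hlt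
  have hp0 : p ≠ 0 := by rintro rfl; simp at hlt
  obtain ⟨α, hα, hαdeg⟩ :=
    Finset.exists_mem_eq_sup p.support (support_nonempty.mpr hp0) Finsupp.degree
  replace hαdeg : p.totalDegree = α.degree := hαdeg
  have hcast : ∀ {β : σ →₀ ℕ} {j : σ}, β ≤ α → β j ≠ 0 → (β j : R) ≠ 0 := fun {β j} hβα hj =>
    Nat.cast_ne_zero_of_factorial_ne_zero (Nat.pos_of_ne_zero hj)
      ((hβα j).trans (α.le_degree j) |>.trans (hαdeg ▸ hp)) hd
  obtain ⟨j, hj⟩ : ∃ j, α j ≠ 0 :=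
    (DFunLike.ne_iff (g := 0)).mp fun h0 => by simp [h0] at hαdeg; omega
  set β := α - Finsupp.single j 1
  have hβ : β ∈ (pderiv j p).support := sub_single_one_mem_support_pderiv hα (hcast le_rfl hj)
  have hβdeg : β.degree + 1 = α.degree := by
    rw [← Finsupp.degree_single j 1, ← map_add,
      tsub_add_cancel_of_le (Finsupp.single_le_iff.mpr (Nat.one_le_iff_ne_zero.mpr hj))]
  obtain ⟨k, hk⟩ : ∃ k, β k ≠ 0 :=
    (DFunLike.ne_iff (g := 0)).mp fun h0 => by simp [h0] at hβdeg; omega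
  simpa [h] using sub_single_one_mem_support_pderiv hβ (hcast tsub_le_self hk)

end MvPolynomial

/-- If `H` is a polynomial map of degree at most `d` over `K` with `d! ≠ 0` in `K` and
the Jacobian matrix of `H` is antisymmetric, then `deg H ≤ 1`. -/
theorem stmt7 (K : Type*) [Field K] (n d : ℕ) (H : Fin n → MvPolynomial (Fin n) K)
    (hdeg : ∀ i, (H i).totalDegree ≤ d) (hfac : (d.factorial : K) ≠ 0)
    (hanti : ∀ i j, pderiv j (H i) = - pderiv i (H j)) :
    ∀ i, (H i).totalDegree ≤ 1 := by
  intro i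
  rcases le_or_gt d 1 with hd | hd
  · exact (hdeg i).trans hd
  have h2 : (2 : K) ≠ 0 := by
    exact_mod_cast Nat.cast_ne_zero_of_factorial_ne_zero two_pos hd hfac
  exact totalDegree_le_one_of_pderiv_pderiv_eq_zero (hdeg i) hfac
    (pderiv_pderiv_eq_zero_of_pderiv_antisymm h2 hanti i)
end

section
/- Let K be a field and M ∈ Mat_{m,n}(K[x]) a matrix whose entries are polynomials of degree at most 1 with rk M = 1. Then M is equivalent over K (i.e., M can be replaced by SMT with S ∈ GL_m(K), T ∈ GL_n(K)) to a matrix M' such that either only the first column of M' is nonzero, or only the first row of M' is nonzero. -/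
open MvPolynomial Matrix

set_option linter.unusedSectionVars false

section
variable {σ R : Type*} [CommRing R] [IsDomain R]



lemma aux_eq_C_of_totalDegree_eq_zero {S : Type*} [CommSemiring S] {p : MvPolynomial σ S}
    (h : p.totalDegree = 0) : p = C (coeff 0 p) := by
  classical
  ext d
  by_cases hd : d = 0
  · simp [hd]
  · rw [coeff_C, if_neg (Ne.symm hd)]
    by_contra hc
    have hmem : d ∈ p.support := by simpa [mem_support_iff] using hc
    have := (totalDegree_eq_zero_iff σ p).mp h d hmem
    exact hd (Finsupp.ext fun x => this x)

lemma aux_totalDegree_sup (p : MvPolynomial σ R) :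
    p.totalDegree = p.support.sup Finsupp.degree := by
  simp only [totalDegree, Finsupp.sum]; rfl

lemma aux_exists_top (f : MvPolynomial σ R) (hf : f ≠ 0) :
    ∃ d ∈ f.support, Finsupp.degree d = f.totalDegree := by
  obtain ⟨d, hd, hda⟩ := Finset.exists_mem_eq_sup f.support
    (support_nonempty.mpr hf) Finsupp.degree
  exact ⟨d, hd, by rw [aux_totalDegree_sup, hda]⟩

lemma aux_topComponent_ne_zero (f : MvPolynomial σ R) (hf : f ≠ 0) :
    homogeneousComponent f.totalDegree f ≠ 0 := by
  obtain ⟨d, hd, hda⟩ := aux_exists_top f hf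
  intro h0
  have : coeff d (homogeneousComponent f.totalDegree f) = coeff d f := by
    rw [coeff_homogeneousComponent, if_pos hda]
  rw [h0] at this
  exact (mem_support_iff.mp hd) this.symm

lemma aux_lower_lt {f : MvPolynomial σ R} (a : ℕ) (ha : f.totalDegree ≤ a)
    (h : f - homogeneousComponent a f ≠ 0) :
    (f - homogeneousComponent a f).totalDegree < a := by
  classical
  rw [aux_totalDegree_sup]
  rw [Finset.sup_lt_iff]
  · intro d hd
    have hc : coeff d (f - homogeneousComponent a f) ≠ 0 := mem_support_iff.mp hd
    rw [coeff_sub, coeff_homogeneousComponent] at hc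
    by_cases hda : Finsupp.degree d = a
    · rw [if_pos hda] at hc; simp at hc
    · rw [if_neg hda] at hc
      have hmem : d ∈ f.support := by
        rw [mem_support_iff]; intro h0; rw [h0] at hc; simp at hc
      have : Finsupp.degree d ≤ f.totalDegree := by
        rw [aux_totalDegree_sup]; exact Finset.le_sup hmem
      omega
  · -- ⊥ < a : need a > 0
    have hc0 : ∃ d, coeff d (f - homogeneousComponent a f) ≠ 0 := by
      by_contra hall
      push_neg at hall
      exact h (by ext d; simpa using hall d)
    obtain ⟨d, hc⟩ := hc0
    rw [coeff_sub, coeff_homogeneousComponent] at hc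
    by_cases hda : Finsupp.degree d = a
    · rw [if_pos hda] at hc; simp at hc
    · rw [if_neg hda] at hc
      have hmem : d ∈ f.support := by
        rw [mem_support_iff]; intro h0; rw [h0] at hc; simp at hc
      have : Finsupp.degree d ≤ f.totalDegree := by
        rw [aux_totalDegree_sup]; exact Finset.le_sup hmem
      have : (⊥ : ℕ) = 0 := rfl
      omega

lemma aux_totalDegree_mul_eq {f g : MvPolynomial σ R} (hf : f ≠ 0) (hg : g ≠ 0) :
    (f * g).totalDegree = f.totalDegree + g.totalDegree := by
  classical
  refine le_antisymm (totalDegree_mul f g) ?_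
  set a := f.totalDegree with ha
  set b := g.totalDegree with hb
  by_contra hlt
  push_neg at hlt
  set f' := homogeneousComponent a f with hf'
  set g' := homogeneousComponent b g with hg'
  have hcomp : homogeneousComponent (a + b) (f * g) = 0 :=
    homogeneousComponent_eq_zero _ _ hlt
  have key : homogeneousComponent (a + b) (f * g) = f' * g' := by
    have hsplit : f * g = f' * g' + (f' * (g - g') + ((f - f') * g' + (f - f') * (g - g'))) := by
      ring
    rw [hsplit, map_add, map_add, map_add]
    have hz : ∀ (p q : MvPolynomial σ R), p.totalDegree < a + b → q = p →
        homogeneousComponent (a + b) q = 0 := by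
      rintro p q hp rfl; exact homogeneousComponent_eq_zero _ _ hp
    have h1 : homogeneousComponent (a + b) (f' * (g - g')) = 0 := by
      rcases eq_or_ne (g - g') 0 with h0 | h0
      · rw [h0, mul_zero, map_zero]
      · refine homogeneousComponent_eq_zero _ _ ?_
        calc (f' * (g - g')).totalDegree ≤ f'.totalDegree + (g - g').totalDegree :=
              totalDegree_mul _ _
          _ < a + b := by
              have h2 : f'.totalDegree ≤ a := (homogeneousComponent_isHomogeneous a f).totalDegree_le
              have h3 : (g - g').totalDegree < b := aux_lower_lt b le_rfl h0
              omega
    have h2 : homogeneousComponent (a + b) ((f - f') * g') = 0 := by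
      rcases eq_or_ne (f - f') 0 with h0 | h0
      · rw [h0, zero_mul, map_zero]
      · refine homogeneousComponent_eq_zero _ _ ?_
        calc ((f - f') * g').totalDegree ≤ (f - f').totalDegree + g'.totalDegree :=
              totalDegree_mul _ _
          _ < a + b := by
              have h2 : g'.totalDegree ≤ b := (homogeneousComponent_isHomogeneous b g).totalDegree_le
              have h3 : (f - f').totalDegree < a := aux_lower_lt a le_rfl h0
              omega
    have h3 : homogeneousComponent (a + b) ((f - f') * (g - g')) = 0 := by
      rcases eq_or_ne (f - f') 0 with h0 | h0
      · rw [h0, zero_mul, map_zero]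
      rcases eq_or_ne (g - g') 0 with h1 | h1
      · rw [h1, mul_zero, map_zero]
      refine homogeneousComponent_eq_zero _ _ ?_
      calc ((f - f') * (g - g')).totalDegree ≤ (f - f').totalDegree + (g - g').totalDegree :=
            totalDegree_mul _ _
        _ < a + b := by
            have h3 : (f - f').totalDegree < a := aux_lower_lt a le_rfl h0
            have h4 : (g - g').totalDegree < b := aux_lower_lt b le_rfl h1
            omega
    have h4 : homogeneousComponent (a + b) (f' * g') = f' * g' := by
      have hh : (f' * g').IsHomogeneous (a + b) :=
        (homogeneousComponent_isHomogeneous a f).mul (homogeneousComponent_isHomogeneous b g)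
      rw [homogeneousComponent_of_mem ((mem_homogeneousSubmodule _ _).mpr hh), if_pos rfl]
    rw [h1, h2, h3, h4]; ring
  have hfz : f' ≠ 0 := aux_topComponent_ne_zero f hf
  have hgz : g' ≠ 0 := aux_topComponent_ne_zero g hg
  rw [key] at hcomp
  exact (mul_ne_zero hfz hgz) hcomp

end

section
variable {σ : Type*} {K : Type*} [Field K]

lemma aux_isUnit_of_deg_zero {p : MvPolynomial σ K} (hp : p ≠ 0) (h : p.totalDegree = 0) :
    IsUnit p := by
  rw [aux_eq_C_of_totalDegree_eq_zero h]
  have : coeff 0 p ≠ 0 := by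
    intro h0
    exact hp (by rw [aux_eq_C_of_totalDegree_eq_zero h, h0, map_zero])
  exact (isUnit_iff_ne_zero.mpr this).map C

lemma aux_prime_of_deg_one {p : MvPolynomial σ K} (hp : p.totalDegree = 1) : Prime p := by
  have hp0 : p ≠ 0 := by intro h0; rw [h0, totalDegree_zero] at hp; exact one_ne_zero hp.symm
  rw [← UniqueFactorizationMonoid.irreducible_iff_prime]
  constructor
  · intro hu
    obtain ⟨q, hq⟩ := hu.exists_right_inv
    have hq0 : q ≠ 0 := by intro h0; rw [h0, mul_zero] at hq; exact one_ne_zero hq.symm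
    have := aux_totalDegree_mul_eq hp0 hq0
    rw [hq, totalDegree_one, hp] at this
    omega
  · intro f g hfg
    have hf0 : f ≠ 0 := by rintro rfl; rw [zero_mul] at hfg; exact hp0 hfg
    have hg0 : g ≠ 0 := by rintro rfl; rw [mul_zero] at hfg; exact hp0 hfg
    have hsum : f.totalDegree + g.totalDegree = 1 := by
      rw [← aux_totalDegree_mul_eq hf0 hg0, ← hfg, hp]
    rcases Nat.eq_zero_or_pos f.totalDegree with h0 | h1
    · exact Or.inl (aux_isUnit_of_deg_zero hf0 h0)
    · exact Or.inr (aux_isUnit_of_deg_zero hg0 (by omega))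

end

section
variable {K : Type*} [Field K] {m n : ℕ}

lemma aux_factor (M : Matrix (Fin m) (Fin n) (MvPolynomial (Fin n) K))
    (hdeg : ∀ i j, (M i j).totalDegree ≤ 1)
    (hminor : ∀ i j k l, M i j * M k l = M i l * M k j)
    (hne : ∃ i j, M i j ≠ 0) :
    (∃ (u : Fin m → MvPolynomial (Fin n) K) (d : Fin n → K), d ≠ 0 ∧
        ∀ i j, M i j = u i * C (d j)) ∨
    (∃ (c : Fin m → K) (v : Fin n → MvPolynomial (Fin n) K), c ≠ 0 ∧
        ∀ i j, M i j = C (c i) * v j) := by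
  classical
  by_cases hcase : ∃ i₀ j₀, M i₀ j₀ ≠ 0 ∧ (M i₀ j₀).totalDegree = 0
  · -- constant pivot
    obtain ⟨i₀, j₀, hp0, hpd⟩ := hcase
    set a : K := coeff 0 (M i₀ j₀) with haa
    have hpC : M i₀ j₀ = C a := aux_eq_C_of_totalDegree_eq_zero hpd
    have ha : a ≠ 0 := by intro h0; exact hp0 (by rw [hpC, h0, map_zero])
    by_cases hrow : ∀ j, (M i₀ j).totalDegree = 0
    · -- pivot row constant: column factorization
      refine Or.inl ⟨fun i => M i j₀, fun j => coeff 0 (M i₀ j) * a⁻¹, ?_, ?_⟩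
      · intro h0
        have := congrFun h0 j₀
        simp only [Pi.zero_apply] at this
        rw [← haa, mul_inv_cancel₀ ha] at this
        exact one_ne_zero this
      · intro i j
        have hm := hminor i j i₀ j₀
        rw [hpC] at hm
        set b := coeff 0 (M i₀ j) with hbb
        have hrj : M i₀ j = C b := aux_eq_C_of_totalDegree_eq_zero (hrow j)
        have hCa : (C a : MvPolynomial (Fin n) K) ≠ 0 := by
          simpa using ha
        refine mul_right_cancel₀ hCa ?_
        have hkey : (M i j₀ * C (b * a⁻¹)) * C a = M i j₀ * C b := by
          rw [mul_assoc, ← _root_.map_mul, mul_assoc, inv_mul_cancel₀ ha, mul_one]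
        rw [hkey, hm, hrj]
    · -- some entry in pivot row nonconstant ⇒ pivot column constant: row factorization
      push_neg at hrow
      obtain ⟨j₁, hj₁⟩ := hrow
      have hj₁d : (M i₀ j₁).totalDegree = 1 := by have := hdeg i₀ j₁; omega
      have hj₁0 : M i₀ j₁ ≠ 0 := by
        intro h0; rw [h0, totalDegree_zero] at hj₁d; exact one_ne_zero hj₁d.symm
      have hcol : ∀ i, (M i j₀).totalDegree = 0 := by
        intro i
        by_contra hi
        have hid : (M i j₀).totalDegree = 1 := by have := hdeg i j₀; omega
        have hi0 : M i j₀ ≠ 0 := by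
          intro h0; rw [h0, totalDegree_zero] at hid; exact one_ne_zero hid.symm
        have hm := hminor i j₁ i₀ j₀
        -- M i j₁ * M i₀ j₀ = M i j₀ * M i₀ j₁ ; RHS has degree 2, LHS ≤ 1
        have hR : (M i j₀ * M i₀ j₁).totalDegree = 2 := by
          rw [aux_totalDegree_mul_eq hi0 hj₁0, hid, hj₁d]
        have hL : (M i j₁ * M i₀ j₀).totalDegree ≤ 1 := by
          calc (M i j₁ * M i₀ j₀).totalDegree
              ≤ (M i j₁).totalDegree + (M i₀ j₀).totalDegree := totalDegree_mul _ _
            _ ≤ 1 := by have := hdeg i j₁; omega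
        rw [hm] at hL
        omega
      refine Or.inr ⟨fun i => coeff 0 (M i j₀) * a⁻¹, fun j => M i₀ j, ?_, ?_⟩
      · intro h0
        have := congrFun h0 i₀
        simp only [Pi.zero_apply] at this
        rw [← haa, mul_inv_cancel₀ ha] at this
        exact one_ne_zero this
      · intro i j
        have hm := hminor i j i₀ j₀
        rw [hpC] at hm
        set b := coeff 0 (M i j₀) with hbb
        have hci : M i j₀ = C b := aux_eq_C_of_totalDegree_eq_zero (hcol i)
        have hCa : (C a : MvPolynomial (Fin n) K) ≠ 0 := by
          simpa using ha
        refine mul_right_cancel₀ hCa ?_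
        have hkey : (C (b * a⁻¹) * M i₀ j) * C a = C b * M i₀ j := by
          rw [mul_right_comm, ← _root_.map_mul, mul_assoc, inv_mul_cancel₀ ha, mul_one]
        rw [hkey, hm, hci]
  · -- all nonzero entries have degree 1
    push_neg at hcase
    have hdeg1 : ∀ i j, M i j ≠ 0 → (M i j).totalDegree = 1 := by
      intro i j h0
      have := hcase i j h0
      have := hdeg i j
      omega
    obtain ⟨i₀, j₀, hp0⟩ := hne
    set p := M i₀ j₀ with hpp
    have hpd : p.totalDegree = 1 := hdeg1 i₀ j₀ hp0
    have hprime : Prime p := aux_prime_of_deg_one hpd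
    have hdvd : ∀ i j, p ∣ M i j₀ * M i₀ j := by
      intro i j
      exact ⟨M i j, by rw [← hminor i j i₀ j₀]; ring⟩
    -- helper: if p ∣ q and q has degree ≤ 1 then q = p * C e
    have hquot : ∀ q : MvPolynomial (Fin n) K, p ∣ q → q.totalDegree ≤ 1 →
        ∃ e : K, q = p * C e := by
      intro q hq hqd
      obtain ⟨r, hr⟩ := hq
      rcases eq_or_ne r 0 with rfl | hr0
      · exact ⟨0, by rw [hr, map_zero]⟩
      · have hq0 : q ≠ 0 := by rw [hr]; exact mul_ne_zero hprime.ne_zero hr0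
        have : q.totalDegree = p.totalDegree + r.totalDegree := by
          rw [hr]; exact aux_totalDegree_mul_eq hprime.ne_zero hr0
        have hrd : r.totalDegree = 0 := by omega
        exact ⟨coeff 0 r, by rw [hr, ← aux_eq_C_of_totalDegree_eq_zero hrd]⟩
    by_cases hcol : ∃ i₁, ¬ p ∣ M i₁ j₀
    · -- then p divides the whole pivot row: column factorization
      obtain ⟨i₁, hi₁⟩ := hcol
      have hrowdvd : ∀ j, p ∣ M i₀ j := by
        intro j
        rcases (hprime.2.2 _ _ (hdvd i₁ j)) with h | h
        · exact absurd h hi₁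
        · exact h
      have hd : ∀ j, ∃ e : K, M i₀ j = p * C e := fun j => hquot _ (hrowdvd j) (hdeg i₀ j)
      choose d hdspec using hd
      refine Or.inl ⟨fun i => M i j₀, d, ?_, ?_⟩
      · intro h0
        have h1 := hdspec j₀
        rw [congrFun h0 j₀] at h1
        simp only [Pi.zero_apply, map_zero, mul_zero] at h1
        exact hp0 h1
      · intro i j
        have hm := hminor i j i₀ j₀
        -- M i j * p = M i j₀ * M i₀ j = M i j₀ * (p * C (d j))
        have : M i j * p = (M i j₀ * C (d j)) * p := by
          rw [hm, hdspec j]; ring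
        exact mul_right_cancel₀ hprime.ne_zero this
    · push_neg at hcol
      have hc : ∀ i, ∃ e : K, M i j₀ = p * C e := fun i => hquot _ (hcol i) (hdeg i j₀)
      choose c hcspec using hc
      refine Or.inr ⟨c, fun j => M i₀ j, ?_, ?_⟩
      · intro h0
        have h1 := hcspec i₀
        rw [congrFun h0 i₀] at h1
        simp only [Pi.zero_apply, map_zero, mul_zero] at h1
        exact hp0 h1
      · intro i j
        have hm := hminor i j i₀ j₀
        have : M i j * p = (C (c i) * M i₀ j) * p := by
          rw [hm, hcspec i]; ring
        exact mul_right_cancel₀ hprime.ne_zero this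

end

lemma aux_gl_clear {K : Type*} [Field K] {n : ℕ} (d : Fin n → K) (hd : d ≠ 0) :
    ∃ A : (Matrix (Fin n) (Fin n) K)ˣ,
      ∀ j : Fin n, (j : ℕ) ≠ 0 → (((A : Matrix (Fin n) (Fin n) K)) *ᵥ d) j = 0 := by
  classical
  obtain ⟨k, hk⟩ : ∃ k, d k ≠ 0 := by
    by_contra h; push_neg at h; exact hd (funext h)
  haveI : NeZero n := ⟨k.pos.ne'⟩
  set E : Matrix (Fin n) (Fin n) K :=
    Matrix.of (fun i j => if i ≠ k ∧ j = k then d i / d k else 0) with hE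
  have hE2 : E * E = 0 := by
    ext i j
    rw [Matrix.mul_apply]
    refine Finset.sum_eq_zero fun l _ => ?_
    rcases eq_or_ne l k with rfl | hl
    · simp [hE]
    · simp [hE, hl]
  set B : Matrix (Fin n) (Fin n) K := 1 - E with hB
  have hBunit : B * (1 + E) = 1 := by
    have : B * (1 + E) = 1 - E * E := by rw [hB]; noncomm_ring
    rw [this, hE2, sub_zero]
  have hBunit' : (1 + E) * B = 1 := by
    have : (1 + E) * B = 1 - E * E := by rw [hB]; noncomm_ring
    rw [this, hE2, sub_zero]
  set σ : Equiv.Perm (Fin n) := Equiv.swap 0 k with hσ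
  refine ⟨⟨(B.submatrix σ id), ((1 + E).submatrix id σ), ?_, ?_⟩, ?_⟩
  · rw [← Matrix.submatrix_mul B (1 + E) σ id σ Function.bijective_id, hBunit,
      Matrix.submatrix_one σ σ.injective]
  · rw [← Matrix.submatrix_mul (1 + E) B id σ id σ.bijective, hBunit',
      Matrix.submatrix_id_id]
  · intro j hj
    show ((B.submatrix σ id) *ᵥ d) j = 0
    have hBv : ∀ i, (B *ᵥ d) i = if i = k then d k else 0 := by
      intro i
      rw [hB, sub_mulVec]
      have hEv : (E *ᵥ d) i = if i = k then 0 else d i := by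
        rw [mulVec, dotProduct]
        rcases eq_or_ne i k with rfl | hi
        · simp [hE]
        · rw [Finset.sum_eq_single k]
          · simp [hE, hi, div_mul_cancel₀ _ hk]
          · intro l _ hl; simp [hE, hl]
          · intro h; exact absurd (Finset.mem_univ k) h
      rw [Pi.sub_apply, hEv, one_mulVec]
      rcases eq_or_ne i k with rfl | hi
      · simp
      · simp [hi]
    have : ((B.submatrix σ id) *ᵥ d) j = (B *ᵥ d) (σ j) := rfl
    rw [this, hBv]
    have hσj : σ j ≠ k := by
      intro h
      have h0 : σ 0 = k := Equiv.swap_apply_left 0 k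
      have : j = 0 := σ.injective (h.trans h0.symm)
      rw [this] at hj
      exact hj rfl
    rw [if_neg hσj]


/-- A matrix over `K[x]` with entries of degree at most 1 and rank 1 is equivalent over `K`
to a matrix in which only the first column, or only the first row, is nonzero. -/
theorem stmt9 (K : Type*) [Field K] (m n : ℕ)
    (M : Matrix (Fin m) (Fin n) (MvPolynomial (Fin n) K))
    (hdeg : ∀ i j, (M i j).totalDegree ≤ 1)
    (hrk : (M.map (algebraMap (MvPolynomial (Fin n) K)
      (FractionRing (MvPolynomial (Fin n) K)))).rank = 1) :
    ∃ (S : GL (Fin m) K) (T : GL (Fin n) K),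
      (∀ (i : Fin m) (j : Fin n), (j : ℕ) ≠ 0 →
        (((S : Matrix (Fin m) (Fin m) K).map (algebraMap K (MvPolynomial (Fin n) K)) * M *
          ((T : Matrix (Fin n) (Fin n) K).map (algebraMap K (MvPolynomial (Fin n) K)))) i j
            = 0)) ∨
      (∀ (i : Fin m) (j : Fin n), (i : ℕ) ≠ 0 →
        (((S : Matrix (Fin m) (Fin m) K).map (algebraMap K (MvPolynomial (Fin n) K)) * M *
          ((T : Matrix (Fin n) (Fin n) K).map (algebraMap K (MvPolynomial (Fin n) K)))) i j
            = 0)) := by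
  classical
  have hinj : Function.Injective (algebraMap (MvPolynomial (Fin n) K)
      (FractionRing (MvPolynomial (Fin n) K))) :=
    IsFractionRing.injective _ _
  have hne : ∃ i j, M i j ≠ 0 := by
    by_contra h
    push_neg at h
    have hz : M.map (algebraMap (MvPolynomial (Fin n) K)
        (FractionRing (MvPolynomial (Fin n) K))) = 0 := by
      ext i j
      simp [Matrix.map_apply, h i j]
    rw [hz, Matrix.rank_zero] at hrk
    exact one_ne_zero hrk.symm
  have hminor : ∀ i j k l, M i j * M k l = M i l * M k j := by
    rw [Matrix.rank] at hrk
    haveI : Module.Free (FractionRing (MvPolynomial (Fin n) K))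
        ↥(LinearMap.range (M.map (algebraMap (MvPolynomial (Fin n) K)
          (FractionRing (MvPolynomial (Fin n) K)))).mulVecLin) :=
      Module.Free.of_divisionRing _ _
    obtain ⟨v, hv0, hv⟩ := finrank_eq_one_iff'.mp hrk
    have hcols : ∀ j, ∃ c : FractionRing (MvPolynomial (Fin n) K), ∀ i, (algebraMap (MvPolynomial (Fin n) K) (FractionRing (MvPolynomial (Fin n) K))) (M i j) = c * (v : Fin m → FractionRing (MvPolynomial (Fin n) K)) i := by
      intro j
      have hmem : (M.map (algebraMap _ _)) *ᵥ Pi.single j 1 ∈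
          LinearMap.range (M.map (algebraMap (MvPolynomial (Fin n) K)
            (FractionRing (MvPolynomial (Fin n) K)))).mulVecLin :=
        ⟨Pi.single j 1, rfl⟩
      obtain ⟨c, hc⟩ := hv ⟨_, hmem⟩
      refine ⟨c, fun i => ?_⟩
      have := congrArg (fun w : LinearMap.range (M.map (algebraMap (MvPolynomial (Fin n) K)
          (FractionRing (MvPolynomial (Fin n) K)))).mulVecLin =>
          (w : Fin m → FractionRing (MvPolynomial (Fin n) K)) i) hc
      simp only [Submodule.coe_smul, Pi.smul_apply, smul_eq_mul] at this
      rw [this]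
      simp [Matrix.mulVec, dotProduct, Pi.single_apply, Matrix.map_apply]
    choose c hc using hcols
    intro i j k l
    apply hinj
    rw [_root_.map_mul, _root_.map_mul, hc j i, hc l k, hc l i, hc j k]
    ring
  rcases aux_factor M hdeg hminor hne with ⟨u, d, hd0, hfac⟩ | ⟨c, v, hc0, hfac⟩
  · -- column case : S = 1, T = Aᵀ
    obtain ⟨A, hA⟩ := aux_gl_clear d hd0
    refine ⟨1, ⟨(A : Matrix (Fin n) (Fin n) K)ᵀ, ((A⁻¹ : (Matrix (Fin n) (Fin n) K)ˣ) :
        Matrix (Fin n) (Fin n) K)ᵀ, ?_, ?_⟩, Or.inl ?_⟩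
    · rw [← Matrix.transpose_mul, ← Units.val_mul, inv_mul_cancel, Units.val_one,
        Matrix.transpose_one]
    · rw [← Matrix.transpose_mul, ← Units.val_mul, mul_inv_cancel, Units.val_one,
        Matrix.transpose_one]
    · intro i j hj
      have hS : ((1 : GL (Fin m) K) : Matrix (Fin m) (Fin m) K).map
          (algebraMap K (MvPolynomial (Fin n) K)) = 1 := by
        rw [Units.val_one, Matrix.map_one _ (map_zero _) (map_one _)]
      rw [hS, Matrix.one_mul]
      have hT : ∀ a b, ((⟨(A : Matrix (Fin n) (Fin n) K)ᵀ,
          ((A⁻¹ : (Matrix (Fin n) (Fin n) K)ˣ) : Matrix (Fin n) (Fin n) K)ᵀ, a, b⟩ :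
          GL (Fin n) K) : Matrix (Fin n) (Fin n) K) = (A : Matrix (Fin n) (Fin n) K)ᵀ :=
        fun _ _ => rfl
      rw [hT]
      rw [Matrix.mul_apply]
      have : ∀ k, M i k * ((A : Matrix (Fin n) (Fin n) K)ᵀ.map
          (algebraMap K (MvPolynomial (Fin n) K))) k j
          = u i * C ((A : Matrix (Fin n) (Fin n) K) j k * d k) := by
        intro k
        rw [Matrix.map_apply, Matrix.transpose_apply, hfac i k, algebraMap_eq, _root_.map_mul]
        ring
      rw [Finset.sum_congr rfl fun k _ => this k, ← Finset.mul_sum, ← _root_.map_sum]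
      have hAd : ∑ k, (A : Matrix (Fin n) (Fin n) K) j k * d k
          = ((A : Matrix (Fin n) (Fin n) K) *ᵥ d) j := rfl
      rw [hAd, hA j hj, map_zero, mul_zero]
  · -- row case : S = A, T = 1
    obtain ⟨A, hA⟩ := aux_gl_clear c hc0
    refine ⟨A, 1, Or.inr ?_⟩
    intro i j hi
    have hT : ((1 : GL (Fin n) K) : Matrix (Fin n) (Fin n) K).map
        (algebraMap K (MvPolynomial (Fin n) K)) = 1 := by
      rw [Units.val_one, Matrix.map_one _ (map_zero _) (map_one _)]
    rw [hT, Matrix.mul_one]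
    rw [Matrix.mul_apply]
    have : ∀ k, (((A : Matrix (Fin m) (Fin m) K)).map
        (algebraMap K (MvPolynomial (Fin n) K))) i k * M k j
        = C ((A : Matrix (Fin m) (Fin m) K) i k * c k) * v j := by
      intro k
      rw [Matrix.map_apply, hfac k j, algebraMap_eq, _root_.map_mul]
      ring
    rw [Finset.sum_congr rfl fun k _ => this k, ← Finset.sum_mul, ← _root_.map_sum]
    have hAc : ∑ k, (A : Matrix (Fin m) (Fin m) K) i k * c k
        = ((A : Matrix (Fin m) (Fin m) K) *ᵥ c) i := rfl
    rw [hAc, hA i hi, map_zero, zero_mul]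
end

section
/- Let K be a field and H ∈ K[x]ⁿ a polynomial map with symmetric Jacobian matrix JH. If for each i the i-th diagonal entry of JH has no terms whose degree with respect to xᵢ is congruent to −2 in K (i.e., equals −2 as an element of K), then there exists a polynomial h ∈ K[x] such that H = (Jh)ᵀ and JH equals the Hessian matrix of h. -/
/-!
Termwise integration in `xᵢ` inverts `∂ᵢ` on monomials `x^d` with `dᵢ + 1 ≠ 0` in `K`, and the
hypothesis on `∂ᵢHᵢ` says exactly that every monomial of `Hᵢ` is of this kind. In characteristic
`p` the kernel of `∂ₖ` is spanned by the monomials whose `xₖ`-exponent vanishes in `K`, so let `Pᵢ`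
be the projection onto the monomials killed by every `∂ₖ` with `k > i`, and put
`h = ∑ᵢ ∫ Pᵢ Hᵢ dxᵢ`. Applying `∂ⱼ`, the summands with `i < j` vanish, the one with `i = j` gives
`Pⱼ Hⱼ`, and for `i > j` symmetry turns `∂ⱼ Pᵢ Hᵢ` into `∂ᵢ Pᵢ Hⱼ`, whose integral is
`Pᵢ Hⱼ - Pᵢ₋₁ Hⱼ`. The sum telescopes to `Pⱼ Hⱼ + (Hⱼ - Pⱼ Hⱼ) = Hⱼ`.
-/

open MvPolynomial

namespace MvPolynomial

section Projection

variable {σ R : Type*} [CommSemiring R]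

theorem basisMonomials_constr_monomial {M : Type*} [AddCommMonoid M] [Module R M]
    (φ : (σ →₀ ℕ) → M) (d : σ →₀ ℕ) (c : R) :
    (basisMonomials σ R).constr R φ (monomial d c) = c • φ d := by
  have : monomial d c = c • basisMonomials σ R d := by simp [coe_basisMonomials, smul_monomial]
  rw [this, map_smul, Module.Basis.constr_basis]

open Classical in
noncomputable def pderivKerProj (S : Set σ) : MvPolynomial σ R →ₗ[R] MvPolynomial σ R :=
  (basisMonomials σ R).constr R fun d => if ∀ k ∈ S, (d k : R) = 0 then monomial d 1 else 0

open Classical in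
theorem pderivKerProj_monomial (S : Set σ) (d : σ →₀ ℕ) (c : R) :
    pderivKerProj S (monomial d c) = if ∀ k ∈ S, (d k : R) = 0 then monomial d c else 0 := by
  rw [pderivKerProj, basisMonomials_constr_monomial]
  split_ifs <;> simp [smul_monomial]

open Classical in
theorem coeff_pderivKerProj (S : Set σ) (e : σ →₀ ℕ) (f : MvPolynomial σ R) :
    coeff e (pderivKerProj S f) = if ∀ k ∈ S, (e k : R) = 0 then coeff e f else 0 := by
  induction f using induction_on' with
  | monomial d c =>
    rw [pderivKerProj_monomial]
    by_cases hde : d = e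
    · subst hde
      split_ifs <;> simp
    · split_ifs <;> simp [coeff_monomial, hde]
  | add f g hf hg => rw [map_add, coeff_add, hf, hg, coeff_add]; split_ifs <;> simp

theorem support_pderivKerProj_subset (S : Set σ) (f : MvPolynomial σ R) :
    (pderivKerProj S f).support ⊆ f.support := by
  intro e he
  rw [mem_support_iff, coeff_pderivKerProj] at he
  rw [mem_support_iff]
  split_ifs at he <;> simp_all

theorem pderivKerProj_empty (f : MvPolynomial σ R) : pderivKerProj ∅ f = f := by
  ext e
  simp [coeff_pderivKerProj]

theorem pderivKerProj_pderivKerProj (S T : Set σ) (f : MvPolynomial σ R) :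
    pderivKerProj S (pderivKerProj T f) = pderivKerProj (S ∪ T) f := by
  ext e
  simp only [coeff_pderivKerProj]
  split_ifs <;> simp_all [or_imp, forall_and]

theorem pderiv_pderivKerProj_of_mem {S : Set σ} {k : σ} (hk : k ∈ S) (f : MvPolynomial σ R) :
    pderiv k (pderivKerProj S f) = 0 := by
  ext m
  rw [coeff_pderiv, coeff_pderivKerProj, coeff_zero]
  split_ifs with h
  · have := h k hk
    simp_all
  · rw [zero_mul]

theorem pderiv_pderivKerProj_of_notMem {S : Set σ} {j : σ} (hj : j ∉ S) (f : MvPolynomial σ R) :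
    pderiv j (pderivKerProj S f) = pderivKerProj S (pderiv j f) := by
  ext m
  have hm : ∀ k ∈ S, (m + Finsupp.single j 1 : σ →₀ ℕ) k = m k := fun k hk => by
    simp [Finsupp.single_eq_of_ne (show k ≠ j from fun h => hj (h ▸ hk))]
  rw [coeff_pderiv, coeff_pderivKerProj, coeff_pderivKerProj, coeff_pderiv]
  have hcond : (∀ k ∈ S, ((m + Finsupp.single j 1 : σ →₀ ℕ) k : R) = 0) ↔ ∀ k ∈ S, (m k : R) = 0 :=
    forall₂_congr fun k hk => by rw [hm k hk]
  by_cases h : ∀ k ∈ S, (m k : R) = 0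
  · rw [if_pos (hcond.mpr h), if_pos h]
  · rw [if_neg (mt hcond.mp h), if_neg h, zero_mul]

end Projection

section Integral

variable {σ K : Type*} [Field K]

/-- Since `0⁻¹ = 0`, a monomial `x^d` with `dᵢ + 1 = 0` in `K` is sent to `0`. -/
noncomputable def integral (i : σ) : MvPolynomial σ K →ₗ[K] MvPolynomial σ K :=
  (basisMonomials σ K).constr K fun d => monomial (d + Finsupp.single i 1) ((d i : K) + 1)⁻¹

theorem integral_monomial (i : σ) (d : σ →₀ ℕ) (c : K) :
    integral i (monomial d c) = monomial (d + Finsupp.single i 1) (c / ((d i : K) + 1)) := by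
  rw [integral, basisMonomials_constr_monomial, smul_monomial, smul_eq_mul, div_eq_mul_inv]

theorem coeff_add_single_integral (i : σ) (m : σ →₀ ℕ) (f : MvPolynomial σ K) :
    coeff (m + Finsupp.single i 1) (integral i f) = coeff m f / ((m i : K) + 1) := by
  classical
  induction f using induction_on' with
  | monomial d c =>
    rw [integral_monomial]
    by_cases hdm : d = m
    · simp [hdm]
    · simp [coeff_monomial, hdm]
  | add f g hf hg => rw [map_add, coeff_add, hf, hg, coeff_add, add_div]

theorem pderiv_integral_self {i : σ} {f : MvPolynomial σ K}
    (hf : ∀ d ∈ f.support, (d i : K) + 1 ≠ 0) : pderiv i (integral i f) = f := by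
  ext m
  rw [coeff_pderiv, coeff_add_single_integral]
  by_cases hm : m ∈ f.support
  · exact div_mul_cancel₀ _ (hf m hm)
  · rw [notMem_support_iff.mp hm, zero_div, zero_mul]

theorem pderiv_integral_of_ne {i j : σ} (hij : j ≠ i) (f : MvPolynomial σ K) :
    pderiv j (integral i f) = integral i (pderiv j f) := by
  classical
  induction f using induction_on' with
  | monomial d c =>
    rw [integral_monomial, pderiv_monomial, pderiv_monomial, integral_monomial]
    have hj : (d + Finsupp.single i 1 : σ →₀ ℕ) j = d j := by simp [hij.symm]
    have hi : (d - Finsupp.single j 1 : σ →₀ ℕ) i = d i := by simp [hij]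
    have hd : d + Finsupp.single i 1 - Finsupp.single j 1
        = d - Finsupp.single j 1 + Finsupp.single i 1 := by
      ext k
      simp only [Finsupp.tsub_apply, Finsupp.add_apply, Finsupp.single_apply]
      split_ifs <;> subst_vars <;> simp_all
    rw [hj, hi, hd, div_mul_eq_mul_div]
  | add f g hf hg => rw [map_add, map_add, hf, hg, map_add, map_add]

theorem integral_pderiv_self (i : σ) (f : MvPolynomial σ K) :
    integral i (pderiv i f) = f - pderivKerProj {i} f := by
  induction f using induction_on' with
  | monomial d c =>
    rw [pderiv_monomial, integral_monomial, pderivKerProj_monomial]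
    have hsingle : (∀ k ∈ ({i} : Set σ), (d k : K) = 0) ↔ (d i : K) = 0 := by simp
    rcases Nat.eq_zero_or_pos (d i) with hd | hd
    · rw [if_pos (hsingle.mpr (by simp [hd]))]
      simp [hd]
    have hsub : d - Finsupp.single i 1 + Finsupp.single i 1 = d :=
      tsub_add_cancel_of_le (Finsupp.single_le_iff.mpr hd)
    have hcast : (((d - Finsupp.single i 1 : σ →₀ ℕ) i : ℕ) : K) + 1 = d i := by
      simp [Nat.cast_sub hd]
    rw [hsub, hcast]
    by_cases h : (d i : K) = 0
    · rw [if_pos (hsingle.mpr h), h]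
      simp
    · rw [if_neg (mt hsingle.mp h), mul_div_cancel_right₀ _ h, sub_zero]
  | add f g hf hg => rw [map_add, map_add, hf, hg, map_add]; abel

theorem cast_add_one_ne_zero_of_pderiv_ne_neg_two {i : σ} {f : MvPolynomial σ K}
    (hf : ∀ d ∈ (pderiv i f).support, (d i : K) ≠ -2) {d : σ →₀ ℕ} (hd : d ∈ f.support) :
    (d i : K) + 1 ≠ 0 := by
  intro h
  have hdi : (d i : K) = -1 := eq_neg_of_add_eq_zero_left h
  have hpos : 0 < d i := Nat.pos_of_ne_zero fun h0 => by simp [h0] at h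
  set m := d - Finsupp.single i 1
  have hmd : m + Finsupp.single i 1 = d := tsub_add_cancel_of_le (Finsupp.single_le_iff.mpr hpos)
  have hmi : (m i : K) = -2 := by
    simp only [m, Finsupp.tsub_apply, Finsupp.single_eq_same, Nat.cast_sub hpos, hdi]
    norm_num
  refine hf m ?_ hmi
  rw [mem_support_iff, coeff_pderiv, hmd, hmi]
  exact mul_ne_zero (mem_support_iff.mp hd) (by norm_num)

end Integral

section Potential

variable {K : Type*} [Field K] {n : ℕ}

def tailVars (t : ℕ) : Set (Fin n) := {k | t ≤ (k : ℕ)}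

theorem tailVars_self : tailVars (n := n) n = ∅ :=
  Set.eq_empty_of_forall_notMem fun k hk => Nat.lt_irrefl _ (k.isLt.trans_le hk)

theorem singleton_union_tailVars (i : Fin n) : {i} ∪ tailVars (i + 1) = tailVars i := by
  ext k
  simp only [tailVars, Set.mem_union, Set.mem_singleton_iff, Set.mem_ofPred_eq, Fin.ext_iff]
  omega

noncomputable def potential (H : Fin n → MvPolynomial (Fin n) K) : MvPolynomial (Fin n) K :=
  ∑ i, integral i (pderivKerProj (tailVars (i + 1)) (H i))

theorem pderiv_potential {H : Fin n → MvPolynomial (Fin n) K}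
    (hsym : ∀ i j, pderiv j (H i) = pderiv i (H j))
    (hint : ∀ i, ∀ d ∈ (H i).support, (d i : K) + 1 ≠ 0) (j : Fin n) :
    pderiv j (potential H) = H j := by
  set G : ℕ → MvPolynomial (Fin n) K :=
    fun t => if (j : ℕ) < t then pderivKerProj (tailVars t) (H j) else 0
  have hterm : ∀ i : Fin n, pderiv j (integral i (pderivKerProj (tailVars (i + 1)) (H i)))
      = G (i + 1) - G i := by
    intro i
    rcases lt_trichotomy i j with hij | rfl | hji
    · have hj : j ∈ tailVars (i + 1) := Nat.succ_le_of_lt hij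
      rw [pderiv_integral_of_ne hij.ne', pderiv_pderivKerProj_of_mem hj, map_zero]
      simp [G, not_le.mpr hij, not_lt.mpr hij.le]
    · rw [pderiv_integral_self fun d hd => hint i d (support_pderivKerProj_subset _ _ hd)]
      simp [G]
    · have hj : j ∉ tailVars (i + 1) := fun h => by simp [tailVars] at h; omega
      have hi : i ∉ tailVars (i + 1) := fun h => by simp [tailVars] at h
      rw [pderiv_integral_of_ne hji.ne, pderiv_pderivKerProj_of_notMem hj, hsym,
        ← pderiv_pderivKerProj_of_notMem hi, integral_pderiv_self, pderivKerProj_pderivKerProj,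
        singleton_union_tailVars]
      simp [G, Fin.lt_def.mp hji, (Fin.lt_def.mp hji).trans (Nat.lt_succ_self _)]
  calc pderiv j (potential H) = ∑ i : Fin n, (G (i + 1) - G i) := by
        rw [potential, map_sum]
        exact Finset.sum_congr rfl fun i _ => hterm i
    _ = ∑ i ∈ Finset.range n, (G (i + 1) - G i) :=
        Fin.sum_univ_eq_sum_range (fun i => G (i + 1) - G i) n
    _ = G n - G 0 := Finset.sum_range_sub G n
    _ = H j := by simp [G, j.isLt, tailVars_self, pderivKerProj_empty]

end Potential

end MvPolynomial

/-- If `JH` is symmetric and for each `i` the `i`-th diagonal entry of `JH` has no term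
whose degree with respect to `xᵢ` equals `−2` in `K`, then `H = (Jh)ᵀ` for some polynomial
`h`, and `JH` is the Hessian matrix of `h`. -/
theorem stmt12 (K : Type*) [Field K] (n : ℕ) (H : Fin n → MvPolynomial (Fin n) K)
    (hsym : ∀ i j, pderiv j (H i) = pderiv i (H j))
    (hdiag : ∀ i : Fin n, ∀ d ∈ (pderiv i (H i)).support, ((d i : ℕ) : K) ≠ -2) :
    ∃ h : MvPolynomial (Fin n) K,
      (∀ i, H i = pderiv i h) ∧
      ∀ i j, pderiv j (H i) = pderiv j (pderiv i h) := by
  have hint : ∀ i, ∀ d ∈ (H i).support, (d i : K) + 1 ≠ 0 := fun i _ hd =>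
    cast_add_one_ne_zero_of_pderiv_ne_neg_two (hdiag i) hd
  have hH : ∀ i, H i = pderiv i (potential H) := fun i => (pderiv_potential hsym hint i).symm
  exact ⟨potential H, hH, fun i j => by rw [← hH i]⟩
end

section
/- Let K be any field and H ∈ K[x₁,…,xₙ]ⁿ a quadratic polynomial map with (JH)² = 0. Then for another n-tuple of indeterminates y, (JH)(y)·(JH)(x) = −(JH)(x)·(JH)(y), i.e., the evaluations of JH at distinct points anticommute. -/
/-!
The entries of `JH` have degree at most one, so `x ↦ (JH)(x)` is an affine matrix-valued map `J`.
Along the line `x + t (y - x)`, with `t` a new indeterminate, `J = J(x) + t (J(y) - J(x))`, and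
`J² = 0` still holds there. The coefficient of `t` gives `J(x) (J(y) - J(x)) + (J(y) - J(x)) J(x) = 0`,
which is the anticommutation relation since `J(x)² = 0`. Extracting a coefficient instead of
polarizing by halves makes the argument work in every characteristic.
-/

open MvPolynomial Matrix

namespace MvPolynomial

variable {σ R : Type*} [CommSemiring R]

theorem totalDegree_pderiv_le (i : σ) (p : MvPolynomial σ R) :
    (pderiv i p).totalDegree ≤ p.totalDegree - 1 := by
  refine Finset.sup_le fun m hm => ?_
  have hm' : m + Finsupp.single i 1 ∈ p.support := by
    rw [mem_support_iff, coeff_pderiv] at hm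
    exact mem_support_iff.mpr (left_ne_zero_of_mul hm)
  have := le_totalDegree hm'
  rw [Finsupp.sum_add_index' (fun _ => rfl) (fun _ _ _ => rfl),
    Finsupp.sum_single_index rfl] at this
  omega

theorem aeval_add_smul_sub_of_totalDegree_le_one {S : Type*} [CommRing S] [Algebra R S]
    {p : MvPolynomial σ R} (hp : p.totalDegree ≤ 1) (u v : σ → S) (t : S) :
    aeval (u + t • (v - u)) p = aeval u p + t * (aeval v p - aeval u p) := by
  rw [p.as_sum]
  simp only [map_sum, ← Finset.sum_sub_distrib, Finset.mul_sum, ← Finset.sum_add_distrib]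
  refine Finset.sum_congr rfl fun m hm => ?_
  rcases Nat.le_one_iff_eq_zero_or_eq_one.mp ((le_totalDegree hm).trans hp) with h | h
  · obtain rfl : m = 0 := (Finsupp.degree_eq_zero_iff m).mp h
    simp
  · obtain ⟨i, rfl⟩ := (Finsupp.sum_eq_one_iff m).mp h
    simp only [aeval_monomial, Finsupp.prod_single_index, pow_one, pow_zero, Pi.add_apply,
      Pi.smul_apply, Pi.sub_apply, smul_eq_mul]
    ring

end MvPolynomial

theorem Polynomial.coeff_one_mul_self_C_add_X_mul_C {S : Type*} [Ring S] (a d : S) :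
    ((C a + X * C d) * (C a + X * C d)).coeff 1 = a * d + d * a := by
  simp [Polynomial.coeff_mul, Finset.Nat.antidiagonal_succ]

namespace Matrix

variable {n : Type*} [Fintype n]

theorem map_mul_self_eq_zero {α β F : Type*} [NonUnitalNonAssocSemiring α]
    [NonUnitalNonAssocSemiring β] [FunLike F α β] [NonUnitalRingHomClass F α β] (f : F) {M : Matrix n n α} (hM : M * M = 0) :
    M.map f * M.map f = 0 := by
  rw [← Matrix.map_mul, hM, Matrix.map_zero _ (map_zero f)]

variable [DecidableEq n] {σ R S : Type*} [CommRing R] [CommRing S] [Algebra R S]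

theorem map_aeval_mul_add_mul_eq_zero {M : Matrix n n (MvPolynomial σ R)}
    (hdeg : ∀ i j, (M i j).totalDegree ≤ 1) (hsq : M * M = 0) (u v : σ → S) :
    M.map (aeval u) * M.map (aeval v) + M.map (aeval v) * M.map (aeval u) = 0 := by
  set A := M.map (aeval u)
  set B := M.map (aeval v)
  let line : σ → Polynomial S :=
    Polynomial.C ∘ u + (Polynomial.X : Polynomial S) • (Polynomial.C ∘ v - Polynomial.C ∘ u)
  have h_line : M.map (aeval line) =
      A.map Polynomial.C + (Polynomial.X : Polynomial S) • (B - A).map Polynomial.C := by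
    ext i j : 1
    rw [map_apply, aeval_add_smul_sub_of_totalDegree_le_one (hdeg i j),
      ← Polynomial.algebraMap_eq, aeval_algebraMap_apply, aeval_algebraMap_apply]
    simp [A, B]
  have h_sq_line : (Polynomial.C A + Polynomial.X * Polynomial.C (B - A)) *
      (Polynomial.C A + Polynomial.X * Polynomial.C (B - A)) = 0 := by
    simpa [h_line] using congrArg matPolyEquiv (map_mul_self_eq_zero (aeval line) hsq)
  have h_coeff := congrArg (Polynomial.coeff · 1) h_sq_line
  simp only [Polynomial.coeff_one_mul_self_C_add_X_mul_C, Polynomial.coeff_zero] at h_coeff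
  calc A * B + B * A = (A * (B - A) + (B - A) * A) + (A * A + A * A) := by noncomm_ring
    _ = 0 := by rw [h_coeff, map_mul_self_eq_zero (aeval u) hsq, add_zero, add_zero]

end Matrix

/-- If `H` is a quadratic polynomial map with `(JH)² = 0`, then for a second tuple of
indeterminates `y`, `(JH)(y)·(JH)(x) = −(JH)(x)·(JH)(y)`. -/
theorem stmt18 (K : Type*) [Field K] (n : ℕ) (H : Fin n → MvPolynomial (Fin n) K)
    (hdeg : ∀ i, (H i).totalDegree ≤ 2)
    (hsq : (Matrix.of fun (i j : Fin n) => pderiv j (H i)) *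
      (Matrix.of fun (i j : Fin n) => pderiv j (H i)) = 0) :
    ((Matrix.of fun (i j : Fin n) => pderiv j (H i)).map
        (MvPolynomial.aeval (fun i => (X (Sum.inr i) : MvPolynomial (Fin n ⊕ Fin n) K)))) *
      ((Matrix.of fun (i j : Fin n) => pderiv j (H i)).map
        (MvPolynomial.aeval (fun i => (X (Sum.inl i) : MvPolynomial (Fin n ⊕ Fin n) K)))) =
    -(((Matrix.of fun (i j : Fin n) => pderiv j (H i)).map
        (MvPolynomial.aeval (fun i => (X (Sum.inl i) : MvPolynomial (Fin n ⊕ Fin n) K)))) *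
      ((Matrix.of fun (i j : Fin n) => pderiv j (H i)).map
        (MvPolynomial.aeval (fun i => (X (Sum.inr i) : MvPolynomial (Fin n ⊕ Fin n) K))))) := by
  have hdeg_jac : ∀ i j, (pderiv j (H i)).totalDegree ≤ 1 := fun i j =>
    (totalDegree_pderiv_le j (H i)).trans (by have := hdeg i; omega)
  exact eq_neg_of_add_eq_zero_left (map_aeval_mul_add_mul_eq_zero hdeg_jac hsq _ _)
end
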